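/- arXiv:1705.08740 — 7 statements merged into one kernel-verified Lean document; each statement's English description precedes it below -/
import Mathlib

section
/- Let T be a tensor of rank r with a rank decomposition T = T_1 + ... + T_r into simple tensors. If two 3-slices of T (with indices α and β) coincide, then for every i, the 3-slices of T_i with indices α and β coincide as well. -/
/-!
If the `α`- and `β`-slices of some summand of a rank decomposition differed, then with
`d u := c u α - c u β` the matrices `a u ⊗ b u` would satisfy the nontrivial linear relation
`∑ u, d u • a u ⊗ b u = 0`. Solving it for one summand with `d u₀ ≠ 0` and absorbing that summand
into the others (by shifting their third factors) gives a decomposition with fewer terms,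
contradicting minimality of the rank.
-/

/-- A 3-dimensional tensor is simple if `T i j k = a i * b j * c k`. -/
def Simple {I J K : Type*} (T : I → J → K → ℂ) : Prop :=
  ∃ (a : I → ℂ) (b : J → ℂ) (c : K → ℂ), ∀ i j k, T i j k = a i * b j * c k

/-- The tensor rank: the smallest `r` such that `T` is a sum of `r` simple tensors. -/
noncomputable def trank {I J K : Type*} (T : I → J → K → ℂ) : ℕ :=
  sInf {r | ∃ f : Fin r → (I → J → K → ℂ),
    (∀ u, Simple (f u)) ∧ ∀ i j k, (∑ u, f u i j k) = T i j k}

section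

variable {I J K : Type*}

theorem trank_le_of_sum_simple {T : I → J → K → ℂ} {n : ℕ} (g : Fin n → I → J → K → ℂ)
    (hg : ∀ v, Simple (g v)) (hsum : ∀ i j k, ∑ v, g v i j k = T i j k) : trank T ≤ n :=
  Nat.sInf_le ⟨g, hg, hsum⟩

/-- The summand `u₀` is absorbed by replacing each `c v` with `c v - (d v / d u₀) • c u₀`. -/
theorem exists_sum_simple_of_linear_relation {n : ℕ} (a : Fin (n + 1) → I → ℂ)
    (b : Fin (n + 1) → J → ℂ) (c : Fin (n + 1) → K → ℂ) (d : Fin (n + 1) → ℂ)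
    (u₀ : Fin (n + 1)) (hd : d u₀ ≠ 0) (hrel : ∀ i j, ∑ u, a u i * b u j * d u = 0) :
    ∃ g : Fin n → I → J → K → ℂ, (∀ v, Simple (g v)) ∧
      ∀ i j k, ∑ v, g v i j k = ∑ u, a u i * b u j * c u k := by
  let s := u₀.succAbove
  refine ⟨fun v i j k => a (s v) i * b (s v) j * (c (s v) k - d (s v) / d u₀ * c u₀ k),
    fun v => ⟨a (s v), b (s v), _, fun _ _ _ => rfl⟩, fun i j k => ?_⟩
  have hrest : ∑ v, a (s v) i * b (s v) j * d (s v) = -(a u₀ i * b u₀ j * d u₀) := by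
    linear_combination (Fin.sum_univ_succAbove _ u₀).symm.trans (hrel i j)
  calc ∑ v, a (s v) i * b (s v) j * (c (s v) k - d (s v) / d u₀ * c u₀ k)
      = ∑ v, a (s v) i * b (s v) j * c (s v) k
          - c u₀ k / d u₀ * ∑ v, a (s v) i * b (s v) j * d (s v) := by
        rw [Finset.mul_sum, ← Finset.sum_sub_distrib]
        refine Finset.sum_congr rfl fun v _ => ?_
        ring
    _ = a u₀ i * b u₀ j * c u₀ k + ∑ v, a (s v) i * b (s v) j * c (s v) k := by
        rw [hrest]
        field_simp
        ring
    _ = ∑ u, a u i * b u j * c u k :=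
        (Fin.sum_univ_succAbove (fun u => a u i * b u j * c u k) u₀).symm

theorem trank_lt_of_linear_relation {T : I → J → K → ℂ} {r : ℕ} (a : Fin r → I → ℂ)
    (b : Fin r → J → ℂ) (c : Fin r → K → ℂ) (hT : ∀ i j k, T i j k = ∑ u, a u i * b u j * c u k)
    (d : Fin r → ℂ) (u₀ : Fin r) (hd : d u₀ ≠ 0) (hrel : ∀ i j, ∑ u, a u i * b u j * d u = 0) :
    trank T < r := by
  obtain ⟨n, rfl⟩ : ∃ n, r = n + 1 := ⟨r - 1, (Nat.succ_pred_eq_of_pos u₀.pos).symm⟩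
  obtain ⟨g, hg, hsum⟩ := exists_sum_simple_of_linear_relation a b c d u₀ hd hrel
  exact Nat.lt_succ_of_le <|
    trank_le_of_sum_simple g hg fun i j k => (hsum i j k).trans (hT i j k).symm

end

theorem stmt0_general {I J K : Type*}
    (T : I → J → K → ℂ) (r : ℕ) (hr : r = trank T)
    (f : Fin r → (I → J → K → ℂ)) (hsimple : ∀ u, Simple (f u))
    (hsum : ∀ i j k, (∑ u, f u i j k) = T i j k)
    (α β : K) (hT : ∀ i j, T i j α = T i j β) :
    ∀ u i j, f u i j α = f u i j β := by
  by_contra! ⟨u₀, i₀, j₀, hne⟩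
  choose a b c hf using hsimple
  have hT' : ∀ i j k, T i j k = ∑ u, a u i * b u j * c u k := fun i j k => by
    simp only [← hsum, hf]
  have hrel : ∀ i j, ∑ u, a u i * b u j * (c u α - c u β) = 0 := fun i j => by
    simp only [mul_sub, Finset.sum_sub_distrib, ← hT', hT, sub_self]
  have hd : c u₀ α - c u₀ β ≠ 0 := by
    rw [hf, hf] at hne
    exact sub_ne_zero.mpr fun h => hne (by rw [h])
  exact (trank_lt_of_linear_relation a b c hT' _ u₀ hd hrel).ne' hr

/-- If two 3-slices of `T` coincide, then in any rank decomposition of `T`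
the corresponding 3-slices of each summand coincide as well. -/
theorem stmt0 {I J K : Type*} [Fintype I] [Fintype J] [Fintype K]
    (T : I → J → K → ℂ) (r : ℕ) (hr : r = trank T)
    (f : Fin r → (I → J → K → ℂ)) (hsimple : ∀ u, Simple (f u))
    (hsum : ∀ i j k, (∑ u, f u i j k) = T i j k)
    (α β : K) (hT : ∀ i j, T i j α = T i j β) :
    ∀ u i j, f u i j α = f u i j β :=
  stmt0_general T r hr f hsimple hsum α β hT
end

section
/- Let T ∈ ℂ^{I×J×K} with K = K' ∪ {1,...,k}, and suppose the 3-slices S_1, ..., S_k of T (with indices 1,...,k) are linearly independent rank-one matrices. Then rank T = k + min { rank T' : T' ∈ T mod₃ span(S_1,...,S_k) }, where T mod₃ V is the set of tensors obtained from T by subtracting from each 3-slice an arbitrary element of V. -/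
/-!
A tensor has rank at most `n` exactly when its 3-slices lie in the span of `n` rank-one
matrices. If `T' ∈ T mod₃ span(S)`, the slices of `T` lie in the span of `S₁, …, S_k` and the
rank-one matrices of a minimal decomposition of `T'`, so `rank T ≤ k + rank T'`. Conversely,
the `S_q` lie in the span `W` of the `r = rank T` rank-one matrices of a minimal decomposition
of `T`; extending `S₁, …, S_k` to a basis of `W` by at most `r - k` of these matrices and
discarding the `span(S)`-components of the slices gives `T' ∈ T mod₃ span(S)` of rank at most
`r - k`.
-/

open Finset Submodule Module Matrix

theorem Matrix.exists_eq_vecMulVec_of_rank_le_one {𝕜 m n : Type*} [Field 𝕜] [Fintype n]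
    {A : Matrix m n 𝕜} (h : A.rank ≤ 1) : ∃ (x : m → 𝕜) (y : n → 𝕜), A = vecMulVec x y := by
  rw [rank_eq_finrank_span_cols] at h
  have := FiniteDimensional.span_of_finite 𝕜 (Set.finite_range A.col)
  obtain ⟨x, hx⟩ := finrank_le_one_iff.mp h
  choose y hy using fun j => hx ⟨A.col j, subset_span (Set.mem_range_self j)⟩
  refine ⟨x, y, ?_⟩
  ext i j
  simpa [vecMulVec_apply, mul_comm] using (congrFun (congrArg Subtype.val (hy j)) i).symm

theorem Submodule.exists_subset_card_add_le_of_linearIndepOn {K V : Type*} [DivisionRing K]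
    [AddCommGroup V] [Module K V] [DecidableEq V] {s t : Finset V}
    (hs : LinearIndepOn K id (s : Set V)) (hst : span K (s : Set V) ≤ span K t) :
    ∃ d ⊆ t, #s + #d ≤ #t ∧ span K (t : Set V) ≤ span K s ⊔ span K d := by
  obtain ⟨b, hbst, hsb, hspan, hb⟩ :=
    exists_linearIndepOn_id_extension hs (Set.subset_union_left (t := (t : Set V)))
  lift b to Finset V using (s ∪ t).finite_toSet.subset (by simpa using hbst)
  have hbst' : b ⊆ s ∪ t := by simpa [← coe_union] using hbst
  have hsb' : s ⊆ b := by simpa using hsb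
  refine ⟨b \ s, fun v hv => ?_, ?_, ?_⟩
  · have := mem_sdiff.mp hv
    simpa [this.2] using hbst' this.1
  · have hspan_eq : span K (b : Set V) = span K t :=
      le_antisymm
        (span_le.mpr fun v hv => (Set.union_subset (span_le.mp hst) subset_span) (hbst hv))
        (span_le.mpr fun v hv => hspan (Set.mem_union_right _ hv))
    calc #s + #(b \ s) = #b := by rw [add_comm, card_sdiff_add_card_eq_card hsb']
      _ = finrank K (span K (b : Set V)) := (finrank_span_finset_eq_card hb).symm
      _ ≤ #t := hspan_eq ▸ finrank_span_finset_le_card t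
  · rw [← span_union, ← coe_union, union_sdiff_of_subset hsb']
    exact span_le.mpr fun v hv => hspan (Set.mem_union_right _ hv)

section TensorRank

variable {I J K : Type*}

def slice3 (T : I → J → K → ℂ) (κ : K) : Matrix I J ℂ := Matrix.of fun i j => T i j κ

/-- `modSlices3 T V` is `T mod₃ V`. -/
def modSlices3 (T : I → J → K → ℂ) (V : Submodule ℂ (Matrix I J ℂ)) :
    Set (I → J → K → ℂ) :=
  {T' | ∀ κ, ∃ v ∈ V, slice3 T' κ = slice3 T κ - v}

variable [Fintype J]

theorem exists_simple_sum_of_slice3_mem_span {ι : Type*} [Fintype ι] {T : I → J → K → ℂ}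
    (G : ι → Matrix I J ℂ) (hG : ∀ t, (G t).rank ≤ 1)
    (hT : ∀ κ, slice3 T κ ∈ span ℂ (Set.range G)) :
    ∃ f : Fin (Fintype.card ι) → (I → J → K → ℂ),
      (∀ u, Simple (f u)) ∧ ∀ i j κ, ∑ u, f u i j κ = T i j κ := by
  choose x y hxy using fun t => exists_eq_vecMulVec_of_rank_le_one (hG t)
  choose c hc using fun κ => (mem_span_range_iff_exists_fun ℂ).mp (hT κ)
  let e := (Fintype.equivFin ι).symm
  refine ⟨fun u i j κ => x (e u) i * y (e u) j * c κ (e u),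
    fun u => ⟨x (e u), y (e u), fun κ => c κ (e u), fun _ _ _ => rfl⟩, fun i j κ => ?_⟩
  rw [e.sum_comp (fun t => x t i * y t j * c κ t)]
  simpa [slice3, Matrix.sum_apply, hxy, vecMulVec_apply, mul_comm]
    using congrFun (congrFun (hc κ) i) j

theorem trank_le_of_slice3_mem_span {ι : Type*} [Fintype ι] {T : I → J → K → ℂ}
    (G : ι → Matrix I J ℂ) (hG : ∀ t, (G t).rank ≤ 1)
    (hT : ∀ κ, slice3 T κ ∈ span ℂ (Set.range G)) :
    trank T ≤ Fintype.card ι :=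
  Nat.sInf_le (exists_simple_sum_of_slice3_mem_span G hG hT)

variable [Fintype I]

theorem slice3_mem_span_single [DecidableEq I] [DecidableEq J] (T : I → J → K → ℂ) (κ : K) :
    slice3 T κ ∈ span ℂ (Set.range fun p : I × J => single p.1 p.2 (1 : ℂ)) := by
  refine (mem_span_range_iff_exists_fun ℂ).mpr ⟨fun p => T p.1 p.2 κ, ?_⟩
  rw [Fintype.sum_prod_type]
  simpa [slice3, smul_single] using (matrix_eq_sum_single (slice3 T κ)).symm

theorem exists_simple_sum_trank (T : I → J → K → ℂ) :
    ∃ f : Fin (trank T) → (I → J → K → ℂ),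
      (∀ u, Simple (f u)) ∧ ∀ i j κ, ∑ u, f u i j κ = T i j κ := by
  classical
  have hrank (p : I × J) : (single p.1 p.2 (1 : ℂ)).rank ≤ 1 := by
    rw [single_eq_single_vecMulVec_single]
    exact rank_vecMulVec_le _ _
  have hne : {r | ∃ f : Fin r → (I → J → K → ℂ),
      (∀ u, Simple (f u)) ∧ ∀ i j κ, ∑ u, f u i j κ = T i j κ}.Nonempty :=
    ⟨_, exists_simple_sum_of_slice3_mem_span _ hrank (slice3_mem_span_single T)⟩
  exact Nat.sInf_mem hne

theorem exists_slice3_mem_span_of_trank (T : I → J → K → ℂ) :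
    ∃ G : Fin (trank T) → Matrix I J ℂ,
      (∀ u, (G u).rank ≤ 1) ∧ ∀ κ, slice3 T κ ∈ span ℂ (Set.range G) := by
  obtain ⟨f, hf, hsum⟩ := exists_simple_sum_trank T
  choose a b c habc using hf
  refine ⟨fun u => vecMulVec (a u) (b u), fun u => rank_vecMulVec_le _ _, fun κ =>
    (mem_span_range_iff_exists_fun ℂ).mpr ⟨fun u => c u κ, ?_⟩⟩
  ext i j
  simp only [Matrix.sum_apply, Matrix.smul_apply, vecMulVec_apply, smul_eq_mul]
  rw [slice3, of_apply, ← hsum]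
  exact sum_congr rfl fun u _ => by rw [habc]; ring

theorem trank_le_add_of_mem_modSlices3 {ι : Type*} [Fintype ι] {T T' : I → J → K → ℂ}
    (S : ι → Matrix I J ℂ) (hS : ∀ t, (S t).rank ≤ 1)
    (hT' : T' ∈ modSlices3 T (span ℂ (Set.range S))) :
    trank T ≤ trank T' + Fintype.card ι := by
  obtain ⟨G, hG, hT'G⟩ := exists_slice3_mem_span_of_trank T'
  choose v hv hT'v using hT'
  have hslice (κ : K) : slice3 T κ ∈ span ℂ (Set.range (Sum.elim G S)) := by
    rw [← eq_sub_iff_add_eq'.mp (hT'v κ), Set.Sum.elim_range, span_union]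
    exact add_mem (mem_sup_right (hv κ)) (mem_sup_left (hT'G κ))
  simpa using trank_le_of_slice3_mem_span (Sum.elim G S) (Sum.forall.mpr ⟨hG, hS⟩) hslice

theorem exists_mem_modSlices3_trank_add_le {k : ℕ} {T : I → J → K → ℂ}
    (S : Fin k → Matrix I J ℂ) (hS : ∀ q, ∃ κ, S q = slice3 T κ)
    (hli : LinearIndependent ℂ S) :
    ∃ T' ∈ modSlices3 T (span ℂ (Set.range S)), trank T' + k ≤ trank T := by
  classical
  obtain ⟨G, hG, hTG⟩ := exists_slice3_mem_span_of_trank T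
  have hSG : span ℂ (Set.range S) ≤ span ℂ (Set.range G) := by
    refine span_le.mpr ?_
    rintro _ ⟨q, rfl⟩
    obtain ⟨κ, hκ⟩ := hS q
    exact hκ ▸ hTG κ
  obtain ⟨d, hdG, hcard, hspan⟩ := exists_subset_card_add_le_of_linearIndepOn
    (s := univ.image S) (t := univ.image G)
    (by simpa using (linearIndepOn_id_range_iff hli.injective).mpr hli) (by simpa using hSG)
  simp only [coe_image, coe_univ, Set.image_univ] at hspan
  choose v hv w hw hvw using fun κ => mem_sup.mp (hspan (by simpa using hTG κ))
  refine ⟨fun i j κ => w κ i j, fun κ => ⟨v κ, hv κ, ?_⟩, ?_⟩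
  · rw [← hvw κ, add_sub_cancel_left]
    rfl
  · have hd : ∀ A : d, (A : Matrix I J ℂ).rank ≤ 1 := fun A => by
      obtain ⟨u, -, hu⟩ := mem_image.mp (hdG A.2)
      exact hu ▸ hG u
    have hT' := trank_le_of_slice3_mem_span (K := K) (T := fun i j κ => w κ i j) _ hd
      fun κ => by rw [Subtype.range_coe]; exact hw κ
    rw [card_image_of_injective _ hli.injective] at hcard
    have := card_image_le (s := univ) (f := G)
    simp only [card_univ, Fintype.card_fin, Fintype.card_coe] at hcard this hT'
    omega

end TensorRank

theorem stmt4_general {I J K' : Type*} [Fintype I] [Fintype J] (k : ℕ)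
    (T : I → J → (Fin k ⊕ K') → ℂ)
    (S : Fin k → Matrix I J ℂ)
    (hS : ∀ q, S q = Matrix.of fun i j => T i j (Sum.inl q))
    (hrank1 : ∀ q, (S q).rank = 1)
    (hli : LinearIndependent ℂ S) :
    trank T = k + sInf {r | ∃ T' : I → J → (Fin k ⊕ K') → ℂ,
      (∀ κ, ∃ v ∈ Submodule.span ℂ (Set.range S),
        (Matrix.of fun i j => T' i j κ) = (Matrix.of fun i j => T i j κ) - v) ∧
      trank T' = r} := by
  change trank T = k + sInf (trank '' modSlices3 T (span ℂ (Set.range S)))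
  have hT : T ∈ modSlices3 T (span ℂ (Set.range S)) :=
    fun κ => ⟨0, zero_mem _, (sub_zero _).symm⟩
  apply le_antisymm
  · obtain ⟨T', hT', hr⟩ := Nat.sInf_mem ((Set.nonempty_of_mem hT).image trank)
    calc trank T ≤ trank T' + Fintype.card (Fin k) :=
          trank_le_add_of_mem_modSlices3 S (fun q => (hrank1 q).le) hT'
      _ = k + sInf (trank '' modSlices3 T (span ℂ (Set.range S))) := by
          rw [hr, Fintype.card_fin, add_comm]
  · obtain ⟨T', hT', hle⟩ :=
      exists_mem_modSlices3_trank_add_le S (fun q => ⟨Sum.inl q, hS q⟩) hli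
    have := Nat.sInf_le (Set.mem_image_of_mem trank hT')
    omega

/-- If the 3-slices of `T` indexed by `{1,…,k}` (here `Fin k` in `Fin k ⊕ K'`) are
linearly independent rank-one matrices, then
`rank T = k + min { rank T' : T' ∈ T mod₃ span(S₁,…,S_k) }`. -/
theorem stmt4 {I J K' : Type*} [Fintype I] [Fintype J] [Fintype K'] (k : ℕ)
    (T : I → J → (Fin k ⊕ K') → ℂ)
    (S : Fin k → Matrix I J ℂ)
    (hS : ∀ q, S q = Matrix.of fun i j => T i j (Sum.inl q))
    (hrank1 : ∀ q, (S q).rank = 1)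
    (hli : LinearIndependent ℂ S) :
    trank T = k + sInf {r | ∃ T' : I → J → (Fin k ⊕ K') → ℂ,
      (∀ κ, ∃ v ∈ Submodule.span ℂ (Set.range S),
        (Matrix.of fun i j => T' i j κ) = (Matrix.of fun i j => T i j κ) - v) ∧
      trank T' = r} :=
  stmt4_general k T S hS hrank1 hli
end

section
/- Let T ∈ ℂ^{I×J×K} with K = K' ∪ {1,...,k}, and suppose the 3-slices S_1, ..., S_k of T are linearly independent (not necessarily rank-one). Then rank T ≥ k + min { rank T' : T' ∈ T mod₃ span(S_1,...,S_k) }. -/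
/-!
Write `T = ∑_{u < R} a_u ⊗ b_u ⊗ c_u` with `R = rank T`, and let `M` be the `k × R` matrix of the
third factors on the slices `1,…,k`, so that `S_q = ∑_u M_{q u} a_u ⊗ b_u`. Linear independence of
the `S_q` forces the rows of `M` to be independent, so some `k` columns of `M` form an invertible
minor. Hence for each slice `κ` there is a combination `∑_q d_q S_q` whose coefficient on
`a_u ⊗ b_u` equals `c_u(κ)` for those `k` indices `u`; subtracting it from slice `κ` kills these
`k` terms, leaving a tensor in `T mod₃ span(S)` of rank at most `R - k`.
-/

open Finset Matrix

theorem Matrix.exists_finset_card_eq_forall_exists_vecMul_eq {R m n : Type*} [Field R]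
    [Fintype m] [Fintype n] (M : Matrix m n R) (hM : LinearIndependent R M) :
    ∃ s : Finset n, #s = Fintype.card m ∧
      ∀ y : n → R, ∃ d : m → R, ∀ u ∈ s, (d ᵥ* M) u = y u := by
  classical
  have hspan : Submodule.span R (Set.range M.col) = ⊤ := by
    apply Submodule.eq_top_of_finrank_eq
    rw [← rank_eq_finrank_span_cols, rank_eq_finrank_span_row, row, finrank_span_eq_card hM,
      Module.finrank_fintype_fun_eq_card]
  obtain ⟨t, -, -, hcols, hli⟩ := exists_linearIndepOn_extension (linearIndepOn_empty R M.col)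
    (Set.empty_subset Set.univ)
  have : Fintype t := Fintype.ofFinite t
  let B : Module.Basis t R (m → R) := .mk hli <| by
    rwa [← hspan, Submodule.span_le, ← Set.image_eq_range, ← Set.image_univ]
  refine ⟨t.toFinset, ?_, fun y => ?_⟩
  · rw [Set.toFinset_card, ← Module.finrank_eq_card_basis B, Module.finrank_fintype_fun_eq_card]
  · -- `d` represents the functional taking the value `y u` on the basis column `M.col u`.
    let ℓ := B.constr R fun u : t => y u
    refine ⟨(dotProductEquiv R m).symm ℓ, fun u hu => ?_⟩
    have hBu : B ⟨u, by simpa using hu⟩ = M.col u := Module.Basis.mk_apply ..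
    show (dotProductEquiv R m).symm ℓ ⬝ᵥ M.col u = y u
    rw [← hBu, ← dotProductEquiv_apply_apply, LinearEquiv.apply_symm_apply,
      Module.Basis.constr_basis]

section TensorRank

variable {I J K ι : Type*}

theorem exists_fin_simple_sum_eq_of_eq_sum (T : I → J → K → ℂ) (s : Finset ι)
    (a : ι → I → ℂ) (b : ι → J → ℂ) (c : ι → K → ℂ)
    (hT : ∀ i j l, T i j l = ∑ u ∈ s, a u i * b u j * c u l) :
    ∃ f : Fin #s → I → J → K → ℂ,
      (∀ u, Simple (f u)) ∧ ∀ i j l, ∑ u, f u i j l = T i j l := by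
  let e := s.equivFin.symm
  refine ⟨fun u i j l => a (e u) i * b (e u) j * c (e u) l,
    fun u => ⟨a (e u), b (e u), c (e u), fun _ _ _ => rfl⟩, fun i j l => ?_⟩
  rw [hT, ← s.sum_coe_sort]
  exact e.sum_comp (fun u => a u i * b u j * c u l)

theorem trank_le_card_of_eq_sum (T : I → J → K → ℂ) (s : Finset ι)
    (a : ι → I → ℂ) (b : ι → J → ℂ) (c : ι → K → ℂ)
    (hT : ∀ i j l, T i j l = ∑ u ∈ s, a u i * b u j * c u l) :
    trank T ≤ #s :=
  Nat.sInf_le (exists_fin_simple_sum_eq_of_eq_sum T s a b c hT)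

theorem exists_eq_sum_trank [Fintype I] [Fintype J] [Fintype K] (T : I → J → K → ℂ) :
    ∃ (a : Fin (trank T) → I → ℂ) (b : Fin (trank T) → J → ℂ) (c : Fin (trank T) → K → ℂ),
      ∀ i j l, T i j l = ∑ u, a u i * b u j * c u l := by
  classical
  have hunits : ∀ i j l, T i j l = ∑ p : I × J × K,
      (Pi.single p.1 1 : I → ℂ) i * (Pi.single p.2.1 1 : J → ℂ) j *
        (Pi.single p.2.2 (T p.1 p.2.1 p.2.2) : K → ℂ) l := by
    intro i j l
    simp [Fintype.sum_prod_type, Pi.single_apply, ite_mul]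
  obtain ⟨f, hf, hsum⟩ : trank T ∈ {r | ∃ f : Fin r → I → J → K → ℂ,
      (∀ u, Simple (f u)) ∧ ∀ i j l, ∑ u, f u i j l = T i j l} :=
    Nat.sInf_mem ⟨_, exists_fin_simple_sum_eq_of_eq_sum T univ _ _ _ hunits⟩
  choose a b c habc using hf
  exact ⟨a, b, c, fun i j l => by simp only [← habc, hsum]⟩

theorem trank_sub_slice_combination_le {m : Type*} [Fintype m] [Fintype ι] [DecidableEq ι]
    (T : I → J → K → ℂ) (a : ι → I → ℂ) (b : ι → J → ℂ) (c : ι → K → ℂ)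
    (hT : ∀ i j l, T i j l = ∑ u, a u i * b u j * c u l) (σ : m → K) (M : Matrix m ι ℂ)
    (hM : ∀ q u, M q u = c u (σ q)) (d : K → m → ℂ) (s : Finset ι)
    (hd : ∀ l, ∀ u ∈ s, (d l ᵥ* M) u = c u l) :
    trank (fun i j l => T i j l - ∑ q, d l q * T i j (σ q)) ≤ #sᶜ := by
  refine trank_le_card_of_eq_sum _ sᶜ a b (fun u l => c u l - (d l ᵥ* M) u) fun i j l => ?_
  have hexpand : T i j l - ∑ q, d l q * T i j (σ q)
      = ∑ u, a u i * b u j * (c u l - (d l ᵥ* M) u) := by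
    simp only [hT, hM, vecMul, dotProduct, mul_sub, sum_sub_distrib, mul_sum]
    rw [sum_comm]
    congr! 2 with u
    exact sum_congr rfl fun q _ => by ring
  rw [hexpand]
  refine (sum_subset (subset_univ sᶜ) fun u _ hu => ?_).symm
  rw [hd l u (by simpa using hu), sub_self, mul_zero]

end TensorRank

/-- If the 3-slices of `T` indexed by `{1,…,k}` are linearly independent
(not necessarily rank-one), then
`rank T ≥ k + min { rank T' : T' ∈ T mod₃ span(S₁,…,S_k) }`. -/
theorem stmt5 {I J K' : Type*} [Fintype I] [Fintype J] [Fintype K'] (k : ℕ)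
    (T : I → J → (Fin k ⊕ K') → ℂ)
    (S : Fin k → Matrix I J ℂ)
    (hS : ∀ q, S q = Matrix.of fun i j => T i j (Sum.inl q))
    (hli : LinearIndependent ℂ S) :
    trank T ≥ k + sInf {r | ∃ T' : I → J → (Fin k ⊕ K') → ℂ,
      (∀ κ, ∃ v ∈ Submodule.span ℂ (Set.range S),
        (Matrix.of fun i j => T' i j κ) = (Matrix.of fun i j => T i j κ) - v) ∧
      trank T' = r} := by
  classical
  obtain ⟨a, b, c, hT⟩ := exists_eq_sum_trank T
  let M : Matrix (Fin k) (Fin (trank T)) ℂ := of fun q u => c u (Sum.inl q)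
  -- Each slice is the image of the corresponding row of `M` under one linear map.
  have hSM : ∀ q, S q =
      Fintype.linearCombination ℂ (fun u => of fun i j => a u i * b u j) (M q) := by
    intro q
    ext i j
    simp [M, hS, hT, Fintype.linearCombination_apply, Matrix.sum_apply, mul_comm]
  have hM : LinearIndependent ℂ M := ((funext hSM : S = _ ∘ M) ▸ hli).of_comp _
  obtain ⟨s, hs, hy⟩ := M.exists_finset_card_eq_forall_exists_vecMul_eq hM
  choose d hd using fun l => hy fun u => c u l
  have hmod : ∀ l, ∃ v ∈ Submodule.span ℂ (Set.range S),
      (of fun i j => T i j l - ∑ q, d l q * T i j (Sum.inl q)) = (of fun i j => T i j l) - v :=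
    fun l => ⟨∑ q, d l q • S q, Submodule.sum_mem _ fun q _ =>
      Submodule.smul_mem _ _ (Submodule.subset_span ⟨q, rfl⟩), by ext; simp [hS, Matrix.sum_apply]⟩
  have hrank := trank_sub_slice_combination_le T a b c hT Sum.inl M (fun _ _ => rfl) d s hd
  simp only [card_compl, Fintype.card_fin, hs] at hrank
  have hk : k ≤ trank T := by simpa [hs] using s.card_le_univ
  refine (Nat.add_le_add_left ?_ k).trans_eq (Nat.add_sub_cancel' hk)
  exact le_trans (Nat.sInf_le ⟨_, hmod, rfl⟩) hrank
end

section
/- Cloning preserves symmetric rank: if T ∈ ℂ^{I×I×I} is symmetric and 𝒯((i₁,i₂),(j₁,j₂),(k₁,k₂)) = T(i₁,j₁,k₁) for a finite nonempty set Σ of copies, then the symmetric rank of 𝒯 equals the symmetric rank of T. -/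
/-- The symmetric rank: the smallest `r` such that `T` is a sum of `r` symmetric
simple tensors `c • v ⊗ v ⊗ v`. -/
noncomputable def strank {I : Type*} (T : I → I → I → ℂ) : ℕ :=
  sInf {r | ∃ (c : Fin r → ℂ) (v : Fin r → (I → ℂ)),
    ∀ i j k, (∑ u, c u * (v u i * v u j * v u k)) = T i j k}

/- A decomposition of `T` pulls back along `f`, and one of the pullback pushes forward along a
right inverse of `f`; so both tensors admit decompositions of exactly the same lengths
(comparing the sets rather than their infima also covers the junk value `sInf ∅ = 0`). -/
theorem strank_comp_of_surjective {I J : Type*} (T : I → I → I → ℂ) {f : J → I}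
    (hf : Function.Surjective f) :
    strank (fun a b c => T (f a) (f b) (f c)) = strank T := by
  obtain ⟨g, hfg⟩ := hf.hasRightInverse
  unfold strank
  congr 1
  ext r
  constructor
  · rintro ⟨c, w, hw⟩
    refine ⟨c, fun u i => w u (g i), fun i j k => ?_⟩
    simpa only [hfg i, hfg j, hfg k] using hw (g i) (g j) (g k)
  · rintro ⟨c, v, hv⟩
    exact ⟨c, fun u a => v u (f a), fun a b d => hv (f a) (f b) (f d)⟩

theorem stmt9_general {I S : Type*} [Nonempty S]
    (T : I → I → I → ℂ) :
    strank (fun (p q r : I × S) => T p.1 q.1 r.1) = strank T :=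
  strank_comp_of_surjective T Prod.fst_surjective

/-- Cloning (duplicating every index `|Σ|` times) preserves symmetric rank
of a symmetric tensor. -/
theorem stmt9 {I S : Type*} [Fintype I] [Fintype S] [Nonempty S]
    (T : I → I → I → ℂ)
    (hsym : ∀ i j k, T i j k = T j i k ∧ T i j k = T i k j) :
    strank (fun (p q r : I × S) => T p.1 q.1 r.1) = strank T :=
  stmt9_general T
end

section
/- Let T ∈ ℂ^{I×J×K}, with {1,...,k} ⊆ K, and suppose the 3-slices S_1, ..., S_k of T are rank-one and linearly independent. Then for any rank decomposition T = T_1 + ... + T_n and any q ∈ {1,...,k}, if the q-th 3-slice of T_q is collinear to S_q, then the q-th 3-slice of every T_u with u ≠ q is zero. -/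
/-!
In a decomposition `T = ∑ᵤ aᵤ ⊗ bᵤ ⊗ cᵤ` of minimal length the matrices `aᵤ bᵤᵀ` are linearly
independent: a relation `∑ μᵤ aᵤ bᵤᵀ = 0` with `μᵥ ≠ 0` lets the `v`-th term be absorbed into the
others, `T = ∑_{w ≠ v} a_w ⊗ b_w ⊗ (c_w - (μ_w / μ_v) c_v)`, which is one term shorter.
The `q`-th 3-slice of `T` is `∑ᵤ cᵤ(q) aᵤ bᵤᵀ`; if it is a nonzero multiple of the `q`-th slice
`c_p(q) a_p b_pᵀ` of a single term, comparing coefficients forces `cᵤ(q) = 0` for `u ≠ p`.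
-/

open Finset

section

variable {I J K ι : Type*} [Fintype ι]

theorem trank_le_card {T : I → J → K → ℂ} (g : ι → I → J → K → ℂ) (hg : ∀ u, Simple (g u))
    (hsum : ∀ i j k, ∑ u, g u i j k = T i j k) : trank T ≤ Fintype.card ι := by
  let e := Fintype.equivFin ι
  refine Nat.sInf_le ⟨fun t => g (e.symm t), fun t => hg _, fun i j k => ?_⟩
  rw [← hsum, e.symm.sum_comp (fun u => g u i j k)]

theorem linearIndependent_outer_of_card_le_trank {T : I → J → K → ℂ}
    (a : ι → I → ℂ) (b : ι → J → ℂ) (c : ι → K → ℂ)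
    (hsum : ∀ i j k, ∑ u, a u i * b u j * c u k = T i j k) (hcard : Fintype.card ι ≤ trank T) :
    LinearIndependent ℂ (fun u (i : I) (j : J) => a u i * b u j) := by
  classical
  rw [Fintype.linearIndependent_iff]
  intro μ hμ v
  by_contra hv
  have hrel : ∀ i j, ∑ u, μ u * (a u i * b u j) = 0 := fun i j => by
    simpa [Finset.sum_apply] using congrFun (congrFun hμ i) j
  set g : ι → I → J → K → ℂ := fun w i j k => a w i * b w j * (c w k - μ w / μ v * c v k)
  have hgv : ∀ i j k, g v i j k = 0 := fun i j k => by simp [g, div_self hv]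
  have hgsum : ∀ i j k, ∑ w : {w // w ≠ v}, g w i j k = T i j k := fun i j k =>
    calc ∑ w : {w // w ≠ v}, g w i j k
        = ∑ w, g w i j k := by rw [Fintype.sum_eq_add_sum_subtype_ne _ v, hgv, zero_add]
      _ = ∑ w, a w i * b w j * c w k - c v k / μ v * ∑ w, μ w * (a w i * b w j) := by
          rw [mul_sum, ← sum_sub_distrib]
          exact sum_congr rfl fun w _ => by simp only [g]; ring
      _ = T i j k := by rw [hsum, hrel, mul_zero, sub_zero]
  have hle := trank_le_card (fun w : {w // w ≠ v} => g w)
    (fun w => ⟨_, _, _, fun _ _ _ => rfl⟩) hgsum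
  rw [Fintype.card_subtype_compl, Fintype.card_subtype_eq] at hle
  have hpos : 0 < Fintype.card ι := Fintype.card_pos_iff.mpr ⟨v⟩
  omega

theorem eq_zero_of_slice_eq_smul {a : ι → I → ℂ} {b : ι → J → ℂ} {c : ι → K → ℂ}
    (hli : LinearIndependent ℂ (fun u (i : I) (j : J) => a u i * b u j))
    {p : ι} {κ : K} {γ : ℂ} (hγ : γ ≠ 0)
    (hp : ∀ i j, a p i * b p j * c p κ = γ * ∑ u, a u i * b u j * c u κ)
    {u : ι} (hu : u ≠ p) : c u κ = 0 := by
  classical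
  have hslice : ∑ w, c w κ • (fun i j => a w i * b w j)
      = ∑ w, (if w = p then γ⁻¹ * c p κ else 0) • (fun (i : I) (j : J) => a w i * b w j) := by
    ext i j
    simp only [Finset.sum_apply, Pi.smul_apply, smul_eq_mul, ite_mul,
      zero_mul, sum_ite_eq', mem_univ, if_true]
    rw [mul_assoc, show c p κ * (a p i * b p j) = a p i * b p j * c p κ by ring, hp,
      ← mul_assoc, inv_mul_cancel₀ hγ, one_mul]
    exact sum_congr rfl fun w _ => by ring
  simpa [hu] using Fintype.linearIndependent_iffₛ.mp hli _ _ hslice u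

end

theorem stmt10_general {I J K' : Type*} (k : ℕ)
    (T : I → J → (Fin k ⊕ K') → ℂ)
    (S : Fin k → Matrix I J ℂ)
    (hS : ∀ q, S q = Matrix.of fun i j => T i j (Sum.inl q))
    (n : ℕ) (hn : n = trank T)
    (f : Fin n → (I → J → (Fin k ⊕ K') → ℂ))
    (hsimple : ∀ u, Simple (f u))
    (hsum : ∀ i j κ, (∑ u, f u i j κ) = T i j κ)
    (q : Fin k) (hq : (q : ℕ) < n)
    (hcol : ∃ c : ℂ, c ≠ 0 ∧
      (Matrix.of fun i j => f ⟨q, hq⟩ i j (Sum.inl q)) = c • S q) :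
    ∀ u : Fin n, u ≠ ⟨q, hq⟩ → ∀ i j, f u i j (Sum.inl q) = 0 := by
  choose a b c hf using hsimple
  obtain ⟨γ, hγ, hcol⟩ := hcol
  have hdec : ∀ i j κ, ∑ u, a u i * b u j * c u κ = T i j κ := by simpa only [hf] using hsum
  have hli := linearIndependent_outer_of_card_le_trank a b c hdec (by rw [Fintype.card_fin, hn])
  intro u hu i j
  rw [hf u i j, eq_zero_of_slice_eq_smul (c := c) (κ := Sum.inl q) hli hγ (fun i j => ?_) hu,
    mul_zero]
  simpa [hS, hf, hdec] using congrFun (congrFun hcol i) j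

/-- If the 3-slices `S₁,…,S_k` of `T` are rank-one and linearly independent, then in any
rank decomposition `T = T₁ + … + Tₙ` in which the `q`-th 3-slice of `T_q` is collinear
to `S_q`, the `q`-th 3-slice of every `T_u` with `u ≠ q` is zero. -/
theorem stmt10 {I J K' : Type*} [Fintype I] [Fintype J] [Fintype K'] (k : ℕ)
    (T : I → J → (Fin k ⊕ K') → ℂ)
    (S : Fin k → Matrix I J ℂ)
    (hS : ∀ q, S q = Matrix.of fun i j => T i j (Sum.inl q))
    (hrank1 : ∀ q, (S q).rank = 1)
    (hli : LinearIndependent ℂ S)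
    (n : ℕ) (hn : n = trank T)
    (f : Fin n → (I → J → (Fin k ⊕ K') → ℂ))
    (hsimple : ∀ u, Simple (f u))
    (hsum : ∀ i j κ, (∑ u, f u i j κ) = T i j κ)
    (q : Fin k) (hq : (q : ℕ) < n)
    (hcol : ∃ c : ℂ, c ≠ 0 ∧
      (Matrix.of fun i j => f ⟨q, hq⟩ i j (Sum.inl q)) = c • S q) :
    ∀ u : Fin n, u ≠ ⟨q, hq⟩ → ∀ i j, f u i j (Sum.inl q) = 0 :=
  stmt10_general k T S hS n hn f hsimple hsum q hq hcol
end

section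
/- The 4×4×3 tensor E with 3-slices S₁ = [[0,a,1,*],[a,b,1,*],[1,1,0,*],[*,*,*,x]], S₂ = [[a,b,1,*],[b,0,1,*],[1,1,0,*],[*,*,*,y]], S₃ = [[1,1,0,*],[1,1,0,*],[0,0,0,*],[*,*,*,*]] (where the * entries are arbitrary) has rank at least 4 whenever x ≠ y. -/
/-! If `E` had rank `r ≤ 3`, its three slices, linearly independent since `x ≠ y`, would span
the same space as the `r` rank-one matrices `aᵤ bᵤᵀ` of a decomposition, so these would lie in the
span of the slices. Every matrix `M` in that span has `M₂₂ = 0` and `M₀₂ = M₂₀`, so a rank-one one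
has `M₀₂² = M₀₀ M₂₂ = 0`. Hence the span would lie in the hyperplane `M₀₂ = 0`, which misses the
first slice. -/

open Submodule Set

theorem card_lt_of_linearIndependent_of_span_le {K V ι : Type*} [Field K] [AddCommGroup V]
    [Module K V] [Fintype ι] {S : ι → V} (hS : LinearIndependent K S) {r : ℕ} (R : Fin r → V)
    (hSR : span K (range S) ≤ span K (range R)) (H : Submodule K V)
    (hRH : ∀ u, R u ∈ span K (range S) → R u ∈ H) (hSH : ¬ span K (range S) ≤ H) :
    Fintype.card ι < r := by
  by_contra! hr
  have hRS : span K (range R) = span K (range S) := by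
    have := FiniteDimensional.span_of_finite K (finite_range R)
    refine (eq_of_le_of_finrank_le hSR ?_).symm
    calc Module.finrank K (span K (range R)) ≤ r := by
          simpa [Set.finrank] using finrank_range_le_card (R := K) R
      _ ≤ Fintype.card ι := hr
      _ = Module.finrank K (span K (range S)) := (finrank_span_eq_card hS).symm
  refine hSH (hRS ▸ span_le.2 (range_subset_iff.2 fun u => hRH u ?_))
  exact hRS ▸ subset_span (mem_range_self u)

theorem exists_sum_simple {I J K : Type*} [Fintype I] [Fintype J] [Fintype K]
    (T : I → J → K → ℂ) : ∃ r, ∃ f : Fin r → (I → J → K → ℂ),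
      (∀ u, Simple (f u)) ∧ ∀ i j k, (∑ u, f u i j k) = T i j k := by
  classical
  let e := Fintype.equivFin (I × J × K)
  let t (p : I × J × K) : I → J → K → ℂ := fun i j k =>
    (Pi.single p.1 (T p.1 p.2.1 p.2.2) : I → ℂ) i * (Pi.single p.2.1 1 : J → ℂ) j *
      (Pi.single p.2.2 1 : K → ℂ) k
  refine ⟨_, fun u => t (e.symm u), fun u => ⟨_, Pi.single _ 1, Pi.single _ 1, fun _ _ _ => rfl⟩,
    fun i j k => ?_⟩
  rw [e.symm.sum_comp (fun p => t p i j k)]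
  simp [t, Fintype.sum_prod_type, Pi.single_apply]

theorem exists_sum_simple_trank {I J K : Type*} [Fintype I] [Fintype J] [Fintype K]
    (T : I → J → K → ℂ) : ∃ f : Fin (trank T) → (I → J → K → ℂ),
      (∀ u, Simple (f u)) ∧ ∀ i j k, (∑ u, f u i j k) = T i j k :=
  Nat.sInf_mem (exists_sum_simple T)

theorem card_lt_trank_of_linearIndependent_slices {I J K : Type*} [Fintype I] [Fintype J]
    [Fintype K] {T : I → J → K → ℂ} (hT : LinearIndependent ℂ fun k i j => T i j k)
    (H : Submodule ℂ (I → J → ℂ))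
    (hH : ∀ (a : I → ℂ) (b : J → ℂ),
      (fun i j => a i * b j) ∈ span ℂ (range fun k i j => T i j k) → (fun i j => a i * b j) ∈ H)
    (k : K) (hk : (fun i j => T i j k) ∉ H) : Fintype.card K < trank T := by
  obtain ⟨f, hf, hsum⟩ := exists_sum_simple_trank T
  choose a b c hf using hf
  refine card_lt_of_linearIndependent_of_span_le hT (fun u i j => a u i * b u j) ?_ H
    (fun u => hH (a u) (b u)) fun hle => hk (hle (subset_span (mem_range_self k)))
  refine span_le.2 (range_subset_iff.2 fun k => ?_)
  have hslice : (fun i j => T i j k) = ∑ u, c u k • fun i j => a u i * b u j := by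
    ext i j
    simp [← hsum, hf, mul_comm]
  rw [hslice]
  exact sum_mem fun u _ => smul_mem _ _ (subset_span (mem_range_self u))

theorem linearIndependent_slices {a b x y : ℂ} (hxy : x ≠ y) {E : Fin 4 → Fin 4 → Fin 3 → ℂ}
    (h000 : E 0 0 0 = 0) (h010 : E 0 1 0 = a) (h020 : E 0 2 0 = 1)
    (h110 : E 1 1 0 = b) (h330 : E 3 3 0 = x)
    (h001 : E 0 0 1 = a) (h011 : E 0 1 1 = b) (h021 : E 0 2 1 = 1)
    (h111 : E 1 1 1 = 0) (h331 : E 3 3 1 = y)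
    (h002 : E 0 0 2 = 1) (h012 : E 0 1 2 = 1) (h022 : E 0 2 2 = 0)
    (h112 : E 1 1 2 = 1) :
    LinearIndependent ℂ fun k i j => E i j k := by
  refine Fintype.linearIndependent_iff.2 fun g hg => ?_
  have entry (i j : Fin 4) : g 0 * E i j 0 + g 1 * E i j 1 + g 2 * E i j 2 = 0 := by
    simpa [Fin.sum_univ_three] using congr_fun (congr_fun hg i) j
  have e00 := entry 0 0
  have e01 := entry 0 1
  have e02 := entry 0 2
  have e11 := entry 1 1
  have e33 := entry 3 3
  rw [h000, h001, h002] at e00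
  rw [h010, h011, h012] at e01
  rw [h020, h021, h022] at e02
  rw [h110, h111, h112] at e11
  rw [h330, h331] at e33
  have hg0a : a * g 0 = 0 := by
    linear_combination ((2 * a - b) / 3) * e02 - (2 / 3) * e00 + (1 / 3) * e11 + (1 / 3) * e01
  have hg2 : g 2 = 0 := by linear_combination e00 - a * e02 + hg0a
  have hg0 : g 0 = 0 := by
    have : g 0 * (x - y) = 0 := by linear_combination e33 - y * e02 - E 3 3 2 * hg2
    exact (mul_eq_zero.1 this).resolve_right (sub_ne_zero.2 hxy)
  have hg1 : g 1 = 0 := by linear_combination e02 - hg0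
  intro k
  fin_cases k <;> assumption

theorem stmt11_general (a b x y : ℂ) (hxy : x ≠ y) (E : Fin 4 → Fin 4 → Fin 3 → ℂ)
    (h000 : E 0 0 0 = 0) (h010 : E 0 1 0 = a) (h020 : E 0 2 0 = 1)
    (h110 : E 1 1 0 = b)
    (h200 : E 2 0 0 = 1) (h220 : E 2 2 0 = 0)
    (h330 : E 3 3 0 = x)
    (h001 : E 0 0 1 = a) (h011 : E 0 1 1 = b) (h021 : E 0 2 1 = 1)
    (h111 : E 1 1 1 = 0)
    (h201 : E 2 0 1 = 1) (h221 : E 2 2 1 = 0)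
    (h331 : E 3 3 1 = y)
    (h002 : E 0 0 2 = 1) (h012 : E 0 1 2 = 1) (h022 : E 0 2 2 = 0)
    (h112 : E 1 1 2 = 1)
    (h202 : E 2 0 2 = 0) (h222 : E 2 2 2 = 0) :
    4 ≤ trank E := by
  let H : Submodule ℂ (Fin 4 → Fin 4 → ℂ) := LinearMap.ker (LinearMap.proj 2 ∘ₗ LinearMap.proj 0)
  have rankOne (α β : Fin 4 → ℂ)
      (hmem : (fun i j => α i * β j) ∈ span ℂ (range fun k i j => E i j k)) :
      (fun i j => α i * β j) ∈ H := by
    obtain ⟨g, hg⟩ := (mem_span_range_iff_exists_fun ℂ).1 hmem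
    have entry (i j : Fin 4) : α i * β j = g 0 * E i j 0 + g 1 * E i j 1 + g 2 * E i j 2 := by
      simpa [Fin.sum_univ_three] using (congr_fun (congr_fun hg i) j).symm
    have h22 : α 2 * β 2 = 0 := by simp [entry, h220, h221, h222]
    have hsymm : α 0 * β 2 = α 2 * β 0 := by simp [entry, h020, h021, h022, h200, h201, h202]
    have : (α 0 * β 2) ^ 2 = 0 := by linear_combination (α 0 * β 2) * hsymm + (α 0 * β 0) * h22
    exact pow_eq_zero_iff two_ne_zero |>.1 this
  have indep := linearIndependent_slices hxy h000 h010 h020 h110 h330 h001 h011 h021 h111 h331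
    h002 h012 h022 h112
  exact card_lt_trank_of_linearIndependent_slices indep H rankOne 0 (by simp [H, h020])

/-- The 4×4×3 tensor whose 3-slices are
`[[0,a,1,*],[a,b,1,*],[1,1,0,*],[*,*,*,x]]`,
`[[a,b,1,*],[b,0,1,*],[1,1,0,*],[*,*,*,y]]`,
`[[1,1,0,*],[1,1,0,*],[0,0,0,*],[*,*,*,*]]`
(the `*` entries arbitrary) has rank at least 4 whenever `x ≠ y`. -/
theorem stmt11 (a b x y : ℂ) (hxy : x ≠ y) (E : Fin 4 → Fin 4 → Fin 3 → ℂ)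
    (h000 : E 0 0 0 = 0) (h010 : E 0 1 0 = a) (h020 : E 0 2 0 = 1)
    (h100 : E 1 0 0 = a) (h110 : E 1 1 0 = b) (h120 : E 1 2 0 = 1)
    (h200 : E 2 0 0 = 1) (h210 : E 2 1 0 = 1) (h220 : E 2 2 0 = 0)
    (h330 : E 3 3 0 = x)
    (h001 : E 0 0 1 = a) (h011 : E 0 1 1 = b) (h021 : E 0 2 1 = 1)
    (h101 : E 1 0 1 = b) (h111 : E 1 1 1 = 0) (h121 : E 1 2 1 = 1)
    (h201 : E 2 0 1 = 1) (h211 : E 2 1 1 = 1) (h221 : E 2 2 1 = 0)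
    (h331 : E 3 3 1 = y)
    (h002 : E 0 0 2 = 1) (h012 : E 0 1 2 = 1) (h022 : E 0 2 2 = 0)
    (h102 : E 1 0 2 = 1) (h112 : E 1 1 2 = 1) (h122 : E 1 2 2 = 0)
    (h202 : E 2 0 2 = 0) (h212 : E 2 1 2 = 0) (h222 : E 2 2 2 = 0) :
    4 ≤ trank E :=
  stmt11_general a b x y hxy E h000 h010 h020 h110 h200 h220 h330 h001 h011 h021 h111 h201 h221 h331
    h002 h012 h022 h112 h202 h222
end

section
/- If a tensor T has rank r and a subset of its 3-slices {S_i}_{i∈A} are pairwise equal nonzero matrices, then in any rank decomposition T = T_1 + ... + T_r, removing all but one member of each group of equal 3-slices yields a rank decomposition of the restricted tensor; consequently the restricted tensor has rank r. -/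
def IsSimpleSum {I J K : Type*} {r : ℕ} (f : Fin r → I → J → K → ℂ) (T : I → J → K → ℂ) :
    Prop :=
  (∀ u, Simple (f u)) ∧ ∀ i j k, (∑ u, f u i j k) = T i j k

section Reindex

variable {I J K K' : Type*}

theorem Simple.reindex {T : I → J → K → ℂ} (hT : Simple T) (g : K' → K) :
    Simple fun i j k => T i j (g k) := by
  obtain ⟨a, b, c, h⟩ := hT
  exact ⟨a, b, c ∘ g, fun i j k => h i j (g k)⟩

theorem IsSimpleSum.reindex {r : ℕ} {f : Fin r → I → J → K → ℂ} {T : I → J → K → ℂ}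
    (hf : IsSimpleSum f T) (g : K' → K) :
    IsSimpleSum (fun u i j k => f u i j (g k)) fun i j k => T i j (g k) :=
  ⟨fun u => (hf.1 u).reindex g, fun i j k => hf.2 i j (g k)⟩

theorem trank_le_of_isSimpleSum {r : ℕ} {f : Fin r → I → J → K → ℂ} {T : I → J → K → ℂ}
    (hf : IsSimpleSum f T) : trank T ≤ r :=
  Nat.sInf_le ⟨f, hf⟩

theorem exists_isSimpleSum_trank {r : ℕ} {f : Fin r → I → J → K → ℂ} {T : I → J → K → ℂ}
    (hf : IsSimpleSum f T) : ∃ g : Fin (trank T) → I → J → K → ℂ, IsSimpleSum g T :=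
  Nat.sInf_mem (s := {r | ∃ f : Fin r → I → J → K → ℂ, IsSimpleSum f T}) ⟨r, f, hf⟩

-- Without any decomposition of `T`, `trank T` is the junk value `sInf ∅ = 0`.
theorem trank_reindex_le {r : ℕ} {f : Fin r → I → J → K → ℂ} {T : I → J → K → ℂ}
    (hf : IsSimpleSum f T) (g : K' → K) : trank (fun i j k => T i j (g k)) ≤ trank T := by
  obtain ⟨f₀, hf₀⟩ := exists_isSimpleSum_trank hf
  exact trank_le_of_isSimpleSum (hf₀.reindex g)

theorem trank_reindex_eq_of_retraction {r : ℕ} {f : Fin r → I → J → K → ℂ}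
    {T : I → J → K → ℂ} (hf : IsSimpleSum f T) (ι : K' → K) (ρ : K → K')
    (hρ : ∀ i j k, T i j (ι (ρ k)) = T i j k) :
    trank (fun i j k => T i j (ι k)) = trank T := by
  refine le_antisymm (trank_reindex_le hf ι) ?_
  have hT : T = fun i j k => T i j (ι (ρ k)) := by
    funext i j k
    exact (hρ i j k).symm
  calc trank T = trank fun i j k => T i j (ι (ρ k)) := congrArg trank hT
    _ ≤ trank fun i j k => T i j (ι k) := trank_reindex_le (hf.reindex ι) ρ

end Reindex

theorem stmt13_general {I J K : Type*}
    (T : I → J → K → ℂ) (A : Set K) (k0 : K) (hk0 : k0 ∈ A)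
    (heq : ∀ κ ∈ A, ∀ κ' ∈ A, ∀ i j, T i j κ = T i j κ')
    (r : ℕ) (hr : r = trank T)
    (f : Fin r → (I → J → K → ℂ)) (hsimple : ∀ u, Simple (f u))
    (hsum : ∀ i j κ, (∑ u, f u i j κ) = T i j κ) :
    ((∀ u, Simple fun i j (κ : {κ : K // κ ∉ A ∨ κ = k0}) => f u i j κ.val) ∧
      (∀ i j (κ : {κ : K // κ ∉ A ∨ κ = k0}),
        (∑ u, f u i j κ.val) = T i j κ.val) ∧
      r = trank fun i j (κ : {κ : K // κ ∉ A ∨ κ = k0}) => T i j κ.val) ∧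
    trank (fun i j (κ : {κ : K // κ ∉ A ∨ κ = k0}) => T i j κ.val) = trank T := by
  classical
  let ρ : K → {κ : K // κ ∉ A ∨ κ = k0} := fun κ =>
    if hκ : κ ∉ A ∨ κ = k0 then ⟨κ, hκ⟩ else ⟨k0, Or.inr rfl⟩
  have hρ : ∀ i j κ, T i j (ρ κ).val = T i j κ := by
    intro i j κ
    by_cases hκ : κ ∉ A ∨ κ = k0
    · simp only [ρ, dif_pos hκ]
    · simp only [ρ, dif_neg hκ]
      exact heq k0 hk0 κ (not_not.mp (not_or.mp hκ).1) i j
  have hrank := trank_reindex_eq_of_retraction ⟨hsimple, hsum⟩ Subtype.val ρ hρ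
  exact ⟨⟨fun u => (hsimple u).reindex Subtype.val, fun i j κ => hsum i j κ.val,
    hr.trans hrank.symm⟩, hrank⟩

/-- If the 3-slices of `T` indexed by `A` are pairwise equal nonzero matrices, then any
rank decomposition of `T`, restricted to keep only one index `k₀` of the group `A`,
is a rank decomposition of the restricted tensor; consequently the restricted tensor
has the same rank as `T`. -/
theorem stmt13 {I J K : Type*} [Fintype I] [Fintype J] [Fintype K]
    (T : I → J → K → ℂ) (A : Set K) (k0 : K) (hk0 : k0 ∈ A)
    (heq : ∀ κ ∈ A, ∀ κ' ∈ A, ∀ i j, T i j κ = T i j κ')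
    (hne : ∃ i j, T i j k0 ≠ 0)
    (r : ℕ) (hr : r = trank T)
    (f : Fin r → (I → J → K → ℂ)) (hsimple : ∀ u, Simple (f u))
    (hsum : ∀ i j κ, (∑ u, f u i j κ) = T i j κ) :
    ((∀ u, Simple fun i j (κ : {κ : K // κ ∉ A ∨ κ = k0}) => f u i j κ.val) ∧
      (∀ i j (κ : {κ : K // κ ∉ A ∨ κ = k0}),
        (∑ u, f u i j κ.val) = T i j κ.val) ∧
      r = trank fun i j (κ : {κ : K // κ ∉ A ∨ κ = k0}) => T i j κ.val) ∧
    trank (fun i j (κ : {κ : K // κ ∉ A ∨ κ = k0}) => T i j κ.val) = trank T :=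
  stmt13_general T A k0 hk0 heq r hr f hsimple hsum
end
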